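/- arXiv:2311.09419 — 2 statements merged into one kernel-verified Lean document; each statement's English description precedes it below -/
import Mathlib

section
/- Let X₁,…,Xₙ be vectors in ℝ^p and let a ≤ k ≤ b be integers with k ≥ a+1 and b ≥ k+2 (so the window [a,k] contains at least two indices and (k,b] contains at least two indices). Define G(k;a,b) = (2/((k−a+1)(k−a))) Σ_{a≤i<j≤k} X_i·X_j + (2/((b−k)(b−k−1))) Σ_{k+1≤i<j≤b} X_i·X_j − (2/((k−a+1)(b−k))) Σ_{i=a}^{k} Σ_{j=k+1}^{b} X_i·X_j. Then G(k;a,b) = (1/((k−a+1)(k−a)(b−k)(b−k−1))) Σ_{a≤j₁,j₃≤k, j₁≠j₃} Σ_{k+1≤j₂,j₄≤b, j₂≠j₄} (X_{j₁}−X_{j₂})·(X_{j₃}−X_{j₄}). -/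
open MeasureTheory
open scoped RealInnerProductSpace BigOperators

set_option maxHeartbeats 1000000

private lemma lemA (S : Finset ℕ) (f : ℕ → ℝ) {i : ℕ} (hi : i ∈ S) :
    ∑ j ∈ S, (if i ≠ j then f j else 0) = (∑ j ∈ S, f j) - f i := by
  have h : ∀ j, (if i ≠ j then f j else 0) = f j - (if i = j then f j else 0) := by
    intro j; split_ifs <;> simp_all
  simp_rw [h, Finset.sum_sub_distrib, Finset.sum_ite_eq S i f, if_pos hi]

private lemma lemD (S : Finset ℕ) (g : ℕ → ℕ → ℝ) (hg : ∀ i j, g i j = g j i) :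
    ∑ i ∈ S, ∑ j ∈ S, (if i ≠ j then g i j else 0)
      = 2 * ∑ i ∈ S, ∑ j ∈ S, (if i < j then g i j else 0) := by
  have h : ∀ i j, (if i ≠ j then g i j else 0)
      = (if i < j then g i j else 0) + (if j < i then g i j else 0) := by
    intro i j
    rcases lt_trichotomy i j with h | h | h
    · simp [h, h.ne, lt_asymm h]
    · simp [h]
    · simp [h, h.ne', lt_asymm h]
  simp_rw [h, Finset.sum_add_distrib]
  have h2 : ∑ i ∈ S, ∑ j ∈ S, (if j < i then g i j else 0)
      = ∑ i ∈ S, ∑ j ∈ S, (if i < j then g i j else 0) := by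
    rw [Finset.sum_comm]
    exact Finset.sum_congr rfl fun i _ => Finset.sum_congr rfl fun j _ => by
      rw [hg]
  rw [h2]; ring

private lemma lemC (S : Finset ℕ) (c : ℝ) :
    ∑ i ∈ S, ∑ j ∈ S, (if i ≠ j then c else 0)
      = (S.card : ℝ) * ((S.card : ℝ) - 1) * c := by
  have h : ∀ i ∈ S, ∑ j ∈ S, (if i ≠ j then c else 0) = (S.card : ℝ) * c - c := by
    intro i hi
    rw [lemA S (fun _ => c) hi, Finset.sum_const, nsmul_eq_mul]
  rw [Finset.sum_congr rfl h, Finset.sum_const, nsmul_eq_mul]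
  ring

private lemma lemQ (A B : Finset ℕ) (g : ℕ → ℕ → ℝ) (hg : ∀ i j, g i j = g j i) :
    ∑ j₁ ∈ A, ∑ j₃ ∈ A, ∑ j₂ ∈ B, ∑ j₄ ∈ B,
        (if j₁ ≠ j₃ ∧ j₂ ≠ j₄ then g j₁ j₃ - g j₁ j₄ - g j₂ j₃ + g j₂ j₄ else 0)
      = (B.card : ℝ) * ((B.card : ℝ) - 1) *
          (2 * ∑ i ∈ A, ∑ j ∈ A, (if i < j then g i j else 0))
        + (A.card : ℝ) * ((A.card : ℝ) - 1) *
          (2 * ∑ i ∈ B, ∑ j ∈ B, (if i < j then g i j else 0))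
        - 2 * ((A.card : ℝ) - 1) * ((B.card : ℝ) - 1) *
          (∑ i ∈ A, ∑ j ∈ B, g i j) := by
  have h0 : ∀ j₁ j₃ j₂ j₄ : ℕ,
      (if j₁ ≠ j₃ ∧ j₂ ≠ j₄ then g j₁ j₃ - g j₁ j₄ - g j₂ j₃ + g j₂ j₄ else 0)
        = (if j₁ ≠ j₃ ∧ j₂ ≠ j₄ then g j₁ j₃ else 0)
          - (if j₁ ≠ j₃ ∧ j₂ ≠ j₄ then g j₁ j₄ else 0)
          - (if j₁ ≠ j₃ ∧ j₂ ≠ j₄ then g j₂ j₃ else 0)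
          + (if j₁ ≠ j₃ ∧ j₂ ≠ j₄ then g j₂ j₄ else 0) := by
    intros; split_ifs <;> ring
  simp_rw [h0, Finset.sum_add_distrib, Finset.sum_sub_distrib]
  -- Q1
  have hQ1 : ∑ j₁ ∈ A, ∑ j₃ ∈ A, ∑ j₂ ∈ B, ∑ j₄ ∈ B,
      (if j₁ ≠ j₃ ∧ j₂ ≠ j₄ then g j₁ j₃ else 0)
      = (B.card : ℝ) * ((B.card : ℝ) - 1) *
          (2 * ∑ i ∈ A, ∑ j ∈ A, (if i < j then g i j else 0)) := by
    have inner : ∀ j₁ j₃ : ℕ, ∑ j₂ ∈ B, ∑ j₄ ∈ B,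
        (if j₁ ≠ j₃ ∧ j₂ ≠ j₄ then g j₁ j₃ else 0)
        = (B.card : ℝ) * ((B.card : ℝ) - 1) * (if j₁ ≠ j₃ then g j₁ j₃ else 0) := by
      intro j₁ j₃
      by_cases h : j₁ ≠ j₃
      · simp only [h, ne_eq, not_false_iff, true_and, if_true]
        rw [lemC B (g j₁ j₃)]
      · rw [not_ne_iff] at h; subst h; simp
    rw [Finset.sum_congr rfl fun j₁ _ => Finset.sum_congr rfl fun j₃ _ => inner j₁ j₃]
    simp_rw [← Finset.mul_sum]
    rw [lemD A g hg]
  -- Q4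
  have hQ4 : ∑ j₁ ∈ A, ∑ j₃ ∈ A, ∑ j₂ ∈ B, ∑ j₄ ∈ B,
      (if j₁ ≠ j₃ ∧ j₂ ≠ j₄ then g j₂ j₄ else 0)
      = (A.card : ℝ) * ((A.card : ℝ) - 1) *
          (2 * ∑ i ∈ B, ∑ j ∈ B, (if i < j then g i j else 0)) := by
    have inner : ∀ j₁ j₃ : ℕ, ∑ j₂ ∈ B, ∑ j₄ ∈ B,
        (if j₁ ≠ j₃ ∧ j₂ ≠ j₄ then g j₂ j₄ else 0)
        = (if j₁ ≠ j₃ then 2 * ∑ i ∈ B, ∑ j ∈ B, (if i < j then g i j else 0) else 0) := by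
      intro j₁ j₃
      by_cases h : j₁ ≠ j₃
      · simp only [h, ne_eq, not_false_iff, true_and, if_true]
        exact lemD B g hg
      · rw [not_ne_iff] at h; subst h; simp
    rw [Finset.sum_congr rfl fun j₁ _ => Finset.sum_congr rfl fun j₃ _ => inner j₁ j₃]
    rw [lemC A (2 * ∑ i ∈ B, ∑ j ∈ B, (if i < j then g i j else 0))]
  -- Q2
  have hQ2 : ∑ j₁ ∈ A, ∑ j₃ ∈ A, ∑ j₂ ∈ B, ∑ j₄ ∈ B,
      (if j₁ ≠ j₃ ∧ j₂ ≠ j₄ then g j₁ j₄ else 0)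
      = ((A.card : ℝ) - 1) * ((B.card : ℝ) - 1) * (∑ i ∈ A, ∑ j ∈ B, g i j) := by
    have inner : ∀ j₁ j₃ : ℕ, ∑ j₂ ∈ B, ∑ j₄ ∈ B,
        (if j₁ ≠ j₃ ∧ j₂ ≠ j₄ then g j₁ j₄ else 0)
        = (if j₁ ≠ j₃ then ((B.card : ℝ) - 1) * ∑ j ∈ B, g j₁ j else 0) := by
      intro j₁ j₃
      by_cases h : j₁ ≠ j₃
      · simp only [h, ne_eq, not_false_iff, true_and, if_true]
        have h2 : ∀ j₂ ∈ B, ∑ j₄ ∈ B, (if j₂ ≠ j₄ then g j₁ j₄ else 0)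
            = (∑ j ∈ B, g j₁ j) - g j₁ j₂ := fun j₂ hj₂ => lemA B (g j₁) hj₂
        rw [Finset.sum_congr rfl h2, Finset.sum_sub_distrib, Finset.sum_const,
          nsmul_eq_mul]
        ring
      · rw [not_ne_iff] at h; subst h; simp
    rw [Finset.sum_congr rfl fun j₁ _ => Finset.sum_congr rfl fun j₃ _ => inner j₁ j₃]
    have outer : ∀ j₁ ∈ A, ∑ j₃ ∈ A,
        (if j₁ ≠ j₃ then ((B.card : ℝ) - 1) * ∑ j ∈ B, g j₁ j else 0)
        = ((A.card : ℝ) - 1) * (((B.card : ℝ) - 1) * ∑ j ∈ B, g j₁ j) := by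
      intro j₁ hj₁
      rw [lemA A (fun _ => ((B.card : ℝ) - 1) * ∑ j ∈ B, g j₁ j) hj₁,
        Finset.sum_const, nsmul_eq_mul]
      ring
    rw [Finset.sum_congr rfl outer]
    rw [← Finset.mul_sum]
    simp_rw [← Finset.mul_sum]
    ring
  -- Q3
  have hQ3 : ∑ j₁ ∈ A, ∑ j₃ ∈ A, ∑ j₂ ∈ B, ∑ j₄ ∈ B,
      (if j₁ ≠ j₃ ∧ j₂ ≠ j₄ then g j₂ j₃ else 0)
      = ((A.card : ℝ) - 1) * ((B.card : ℝ) - 1) * (∑ i ∈ A, ∑ j ∈ B, g i j) := by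
    have inner : ∀ j₁ j₃ : ℕ, ∑ j₂ ∈ B, ∑ j₄ ∈ B,
        (if j₁ ≠ j₃ ∧ j₂ ≠ j₄ then g j₂ j₃ else 0)
        = (if j₁ ≠ j₃ then ((B.card : ℝ) - 1) * ∑ j ∈ B, g j j₃ else 0) := by
      intro j₁ j₃
      by_cases h : j₁ ≠ j₃
      · simp only [h, ne_eq, not_false_iff, true_and, if_true]
        have h2 : ∀ j₂ ∈ B, ∑ j₄ ∈ B, (if j₂ ≠ j₄ then g j₂ j₃ else 0)
            = ((B.card : ℝ) - 1) * g j₂ j₃ := by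
          intro j₂ hj₂
          rw [lemA B (fun _ => g j₂ j₃) hj₂, Finset.sum_const, nsmul_eq_mul]
          ring
        rw [Finset.sum_congr rfl h2, ← Finset.mul_sum]
      · rw [not_ne_iff] at h; subst h; simp
    rw [Finset.sum_congr rfl fun j₁ _ => Finset.sum_congr rfl fun j₃ _ => inner j₁ j₃]
    have outer : ∀ j₁ ∈ A, ∑ j₃ ∈ A,
        (if j₁ ≠ j₃ then ((B.card : ℝ) - 1) * ∑ j ∈ B, g j j₃ else 0)
        = (∑ j₃ ∈ A, ((B.card : ℝ) - 1) * ∑ j ∈ B, g j j₃)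
          - ((B.card : ℝ) - 1) * ∑ j ∈ B, g j j₁ := by
      intro j₁ hj₁
      exact lemA A (fun j₃ => ((B.card : ℝ) - 1) * ∑ j ∈ B, g j j₃) hj₁
    rw [Finset.sum_congr rfl outer, Finset.sum_sub_distrib, Finset.sum_const,
      nsmul_eq_mul]
    have hs : ∀ S : Finset ℕ, ∀ j₃, (∑ j ∈ S, g j j₃) = ∑ j ∈ S, g j₃ j := by
      intro S j₃; exact Finset.sum_congr rfl fun j _ => hg j j₃
    simp_rw [hs]
    simp_rw [← Finset.mul_sum]
    ring
  rw [hQ1, hQ2, hQ3, hQ4]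
  ring

/-- For vectors `X₁,…,Xₙ` in `ℝ^p` and integers `a ≤ k ≤ b` with `k ≥ a+1` and
`b ≥ k+2`, the statistic `G(k;a,b)` equals the two-sample U-statistic representation
`(1/((k−a+1)(k−a)(b−k)(b−k−1))) Σ_{a≤j₁≠j₃≤k} Σ_{k+1≤j₂≠j₄≤b} (X_{j₁}−X_{j₂})·(X_{j₃}−X_{j₄})`. -/
theorem stmt_2 (p a k b : ℕ) (X : ℕ → EuclideanSpace ℝ (Fin p))
    (hak : a + 1 ≤ k) (hkb : k + 2 ≤ b) :
    (2 / (((k : ℝ) - a + 1) * ((k : ℝ) - a))) *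
        (∑ i ∈ Finset.Icc a k, ∑ j ∈ Finset.Icc a k, if i < j then ⟪X i, X j⟫ else 0)
      + (2 / (((b : ℝ) - k) * ((b : ℝ) - k - 1))) *
        (∑ i ∈ Finset.Icc (k+1) b, ∑ j ∈ Finset.Icc (k+1) b, if i < j then ⟪X i, X j⟫ else 0)
      - (2 / (((k : ℝ) - a + 1) * ((b : ℝ) - k))) *
        (∑ i ∈ Finset.Icc a k, ∑ j ∈ Finset.Icc (k+1) b, ⟪X i, X j⟫)
    = (1 / (((k : ℝ) - a + 1) * ((k : ℝ) - a) * ((b : ℝ) - k) * ((b : ℝ) - k - 1))) *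
        (∑ j₁ ∈ Finset.Icc a k, ∑ j₃ ∈ Finset.Icc a k,
          ∑ j₂ ∈ Finset.Icc (k+1) b, ∑ j₄ ∈ Finset.Icc (k+1) b,
            if j₁ ≠ j₃ ∧ j₂ ≠ j₄ then ⟪X j₁ - X j₂, X j₃ - X j₄⟫ else 0) := by
  set A := Finset.Icc a k with hA
  set B := Finset.Icc (k+1) b with hB
  set g : ℕ → ℕ → ℝ := fun i j => ⟪X i, X j⟫ with hgdef
  have hg : ∀ i j, g i j = g j i := fun i j => real_inner_comm (X j) (X i)
  have hexp : ∀ j₁ j₃ j₂ j₄ : ℕ,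
      (if j₁ ≠ j₃ ∧ j₂ ≠ j₄ then ⟪X j₁ - X j₂, X j₃ - X j₄⟫ else 0)
        = (if j₁ ≠ j₃ ∧ j₂ ≠ j₄ then g j₁ j₃ - g j₁ j₄ - g j₂ j₃ + g j₂ j₄ else 0) := by
    intro j₁ j₃ j₂ j₄
    have hin : ⟪X j₁ - X j₂, X j₃ - X j₄⟫ = g j₁ j₃ - g j₁ j₄ - g j₂ j₃ + g j₂ j₄ := by
      simp only [hgdef, inner_sub_left, inner_sub_right]
      ring
    rw [hin]
  simp_rw [hexp]
  rw [lemQ A B g hg]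
  have hcardA : (A.card : ℝ) = (k : ℝ) - a + 1 := by
    rw [hA, Nat.card_Icc]
    have : k + 1 - a = k - a + 1 := by omega
    rw [this]
    push_cast [Nat.cast_sub (by omega : a ≤ k)]
    ring
  have hcardB : (B.card : ℝ) = (b : ℝ) - k := by
    rw [hB, Nat.card_Icc]
    have : b + 1 - (k + 1) = b - k := by omega
    rw [this]
    push_cast [Nat.cast_sub (by omega : k ≤ b)]
    ring
  rw [hcardA, hcardB]
  set S1 := ∑ i ∈ A, ∑ j ∈ A, (if i < j then g i j else 0) with hS1
  set S2 := ∑ i ∈ B, ∑ j ∈ B, (if i < j then g i j else 0) with hS2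
  set C := ∑ i ∈ A, ∑ j ∈ B, g i j with hC
  have h1 : (k : ℝ) - a + 1 ≠ 0 := by
    have : (a : ℝ) + 1 ≤ k := by exact_mod_cast hak
    nlinarith
  have h2 : (k : ℝ) - a ≠ 0 := by
    have : (a : ℝ) + 1 ≤ k := by exact_mod_cast hak
    nlinarith
  have h3 : (b : ℝ) - k ≠ 0 := by
    have : (k : ℝ) + 2 ≤ b := by exact_mod_cast hkb
    nlinarith
  have h4 : (b : ℝ) - k - 1 ≠ 0 := by
    have : (k : ℝ) + 2 ≤ b := by exact_mod_cast hkb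
    nlinarith
  field_simp
  ring
end

section
/- Let X₁,…,Xₙ be mutually independent integrable random vectors in ℝ^p and let 2 ≤ k₀ ≤ n−2 be such that E[X_i] = μ for 1 ≤ i ≤ k₀ and E[X_i] = μ + Δ for k₀+1 ≤ i ≤ n (a single change in mean at time k₀). Then the statistic G_n(k₀) = (2/(k₀(k₀−1))) Σ_{1≤i<j≤k₀} X_i·X_j + (2/((n−k₀)(n−k₀−1))) Σ_{k₀+1≤i<j≤n} X_i·X_j − (2/(k₀(n−k₀))) Σ_{i=1}^{k₀} Σ_{j=k₀+1}^{n} X_i·X_j satisfies E[G_n(k₀)] = ‖Δ‖₂². In particular E[G_n(k₀)] > 0 whenever Δ ≠ 0. -/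
/-!
For `i ≠ j` independence gives `E⟪X i, X j⟫ = ⟪E (X i), E (X j)⟫`, and `G_n(k)` only involves
such off-diagonal pairs, so its expectation is `G_n(k)` evaluated at the means. When the means
are `a` up to `k` and `b` after, each of the three normalised sums is the average of a constant,
leaving `‖a‖² + ‖b‖² - 2⟪a, b⟫ = ‖a - b‖²`.
-/

open MeasureTheory ProbabilityTheory Finset
open scoped RealInnerProductSpace

theorem sum_sum_ite_lt_const {ι M : Type*} [LinearOrder ι] [AddCommMonoid M] (s : Finset ι)
    (c : M) : ∑ i ∈ s, ∑ j ∈ s, (if i < j then c else 0) = (#s).choose 2 • c := by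
  rw [← sum_product' (f := fun i j => if i < j then c else 0), ← sum_filter, sum_const,
    card_product_filter_lt]

section Independence

variable {Ω E : Type*} [MeasurableSpace Ω] {P : Measure Ω}
  [NormedAddCommGroup E] [InnerProductSpace ℝ E] [MeasurableSpace E] [BorelSpace E]

theorem ProbabilityTheory.IndepFun.integrable_inner {f g : Ω → E} (h : IndepFun f g P)
    (hf : Integrable f P) (hg : Integrable g P) : Integrable (fun ω => ⟪f ω, g ω⟫) P :=
  h.integrable_bilin hf hg (innerSL ℝ)

theorem ProbabilityTheory.IndepFun.integral_inner [CompleteSpace E] {f g : Ω → E}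
    (h : IndepFun f g P) (hf : Integrable f P) (hg : Integrable g P) :
    ∫ ω, ⟪f ω, g ω⟫ ∂P = ⟪∫ ω, f ω ∂P, ∫ ω, g ω ∂P⟫ :=
  h.integral_bilin hf hg (innerSL ℝ)

variable {ι : Type*} {X : ι → Ω → E} {S s : Finset ι} {t : ι → Finset ι}

theorem integrable_sum_sum_inner (hint : ∀ i ∈ S, Integrable (X i) P)
    (hindep : (S : Set ι).Pairwise fun i j => IndepFun (X i) (X j) P)
    (hs : s ⊆ S) (ht : ∀ i ∈ s, t i ⊆ S) (hst : ∀ i ∈ s, i ∉ t i) :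
    Integrable (fun ω => ∑ i ∈ s, ∑ j ∈ t i, ⟪X i ω, X j ω⟫) P :=
  integrable_finsetSum _ fun i hi => integrable_finsetSum _ fun j hj =>
    (hindep (hs hi) (ht i hi hj) fun hij => hst i hi (hij ▸ hj)).integrable_inner
      (hint i (hs hi)) (hint j (ht i hi hj))

theorem integral_sum_sum_inner [CompleteSpace E] (hint : ∀ i ∈ S, Integrable (X i) P)
    (hindep : (S : Set ι).Pairwise fun i j => IndepFun (X i) (X j) P)
    (hs : s ⊆ S) (ht : ∀ i ∈ s, t i ⊆ S) (hst : ∀ i ∈ s, i ∉ t i) :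
    ∫ ω, ∑ i ∈ s, ∑ j ∈ t i, ⟪X i ω, X j ω⟫ ∂P
      = ∑ i ∈ s, ∑ j ∈ t i, ⟪∫ ω, X i ω ∂P, ∫ ω, X j ω ∂P⟫ := by
  have hpair : ∀ i ∈ s, ∀ j ∈ t i, IndepFun (X i) (X j) P := fun i hi j hj =>
    hindep (hs hi) (ht i hi hj) fun hij => hst i hi (hij ▸ hj)
  rw [integral_finsetSum _ fun i hi => integrable_finsetSum _ fun j hj =>
    (hpair i hi j hj).integrable_inner (hint i (hs hi)) (hint j (ht i hi hj))]
  refine sum_congr rfl fun i hi => ?_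
  rw [integral_finsetSum _ fun j hj =>
    (hpair i hi j hj).integrable_inner (hint i (hs hi)) (hint j (ht i hi hj))]
  exact sum_congr rfl fun j hj =>
    (hpair i hi j hj).integral_inner (hint i (hs hi)) (hint j (ht i hi hj))

end Independence

section ChangePoint

variable {E : Type*} [NormedAddCommGroup E] [InnerProductSpace ℝ E]

/-- The statistic `G_n(k)` of the points `x 1, …, x n`. -/
noncomputable def changePointStat (n k : ℕ) (x : ℕ → E) : ℝ :=
  2 / ((k : ℝ) * ((k : ℝ) - 1)) *
      (∑ i ∈ Icc 1 k, ∑ j ∈ Icc 1 k, if i < j then ⟪x i, x j⟫ else 0)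
    + 2 / (((n : ℝ) - k) * ((n : ℝ) - k - 1)) *
      (∑ i ∈ Icc (k + 1) n, ∑ j ∈ Icc (k + 1) n, if i < j then ⟪x i, x j⟫ else 0)
    - 2 / ((k : ℝ) * ((n : ℝ) - k)) * (∑ i ∈ Icc 1 k, ∑ j ∈ Icc (k + 1) n, ⟪x i, x j⟫)

theorem changePointStat_eq_norm_sub_sq {n k : ℕ} {x : ℕ → E} {a b : E} (hk : 2 ≤ k)
    (hkn : k + 2 ≤ n) (ha : ∀ i ∈ Icc 1 k, x i = a) (hb : ∀ i ∈ Icc (k + 1) n, x i = b) :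
    changePointStat n k x = ‖a - b‖ ^ 2 := by
  have h₁ : ∑ i ∈ Icc 1 k, ∑ j ∈ Icc 1 k, (if i < j then ⟪x i, x j⟫ else 0)
      = k.choose 2 • ⟪a, a⟫ := by
    rw [sum_congr rfl fun i hi => sum_congr rfl fun j hj => by rw [ha i hi, ha j hj],
      sum_sum_ite_lt_const, Nat.card_Icc, Nat.add_sub_cancel]
  have h₂ : ∑ i ∈ Icc (k + 1) n, ∑ j ∈ Icc (k + 1) n, (if i < j then ⟪x i, x j⟫ else 0)
      = (n - k).choose 2 • ⟪b, b⟫ := by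
    rw [sum_congr rfl fun i hi => sum_congr rfl fun j hj => by rw [hb i hi, hb j hj],
      sum_sum_ite_lt_const, Nat.card_Icc, Nat.add_sub_add_right]
  have h₃ : ∑ i ∈ Icc 1 k, ∑ j ∈ Icc (k + 1) n, ⟪x i, x j⟫ = (k * (n - k)) • ⟪a, b⟫ := by
    rw [sum_congr rfl fun i hi => sum_congr rfl fun j hj => by rw [ha i hi, hb j hj]]
    simp only [sum_const, Nat.card_Icc, Nat.add_sub_cancel, Nat.add_sub_add_right, smul_smul]
  have hk' : (2 : ℝ) ≤ k := by exact_mod_cast hk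
  have hnk : (2 : ℝ) ≤ n - k := by
    rw [le_sub_iff_add_le, add_comm]
    exact_mod_cast hkn
  rw [changePointStat, h₁, h₂, h₃, norm_sub_sq_real, ← real_inner_self_eq_norm_sq,
    ← real_inner_self_eq_norm_sq]
  simp only [nsmul_eq_mul, Nat.cast_choose_two, Nat.cast_mul, Nat.cast_sub (by omega : k ≤ n)]
  have hk₁ : (k : ℝ) - 1 ≠ 0 := by linarith
  have hnk₁ : (n : ℝ) - k - 1 ≠ 0 := by linarith
  field_simp
  ring

theorem integral_changePointStat {Ω : Type*} [MeasurableSpace Ω] {P : Measure Ω}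
    [CompleteSpace E] [MeasurableSpace E] [BorelSpace E] {X : ℕ → Ω → E} {n k : ℕ}
    (hkn : k ≤ n) (hint : ∀ i ∈ Icc 1 n, Integrable (X i) P)
    (hindep : (↑(Icc 1 n) : Set ℕ).Pairwise fun i j => IndepFun (X i) (X j) P) :
    ∫ ω, changePointStat n k (X · ω) ∂P = changePointStat n k (fun i => ∫ ω, X i ω ∂P) := by
  have hA : Icc 1 k ⊆ Icc 1 n := Icc_subset_Icc le_rfl hkn
  have hB : Icc (k + 1) n ⊆ Icc 1 n := Icc_subset_Icc (by omega) le_rfl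
  have hfilter {s : Finset ℕ} (hs : s ⊆ Icc 1 n) : ∀ i ∈ s, {j ∈ s | i < j} ⊆ Icc 1 n :=
    fun _ _ => (filter_subset _ _).trans hs
  have hirrefl (s : Finset ℕ) : ∀ i ∈ s, i ∉ {j ∈ s | i < j} := by simp
  have hdisj : ∀ i ∈ Icc 1 k, i ∉ Icc (k + 1) n := by simp +contextual
  have hI₁ := integrable_sum_sum_inner hint hindep hA (hfilter hA) (hirrefl _)
  have hI₂ := integrable_sum_sum_inner hint hindep hB (hfilter hB) (hirrefl _)
  have hI₃ := integrable_sum_sum_inner hint hindep hA (fun _ _ => hB) hdisj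
  unfold changePointStat
  simp_rw [← sum_filter]
  rw [integral_sub, integral_add, integral_const_mul, integral_const_mul, integral_const_mul,
    integral_sum_sum_inner hint hindep hA (hfilter hA) (hirrefl _),
    integral_sum_sum_inner hint hindep hB (hfilter hB) (hirrefl _),
    integral_sum_sum_inner hint hindep hA (fun _ _ => hB) hdisj]
  exacts [hI₁.const_mul _, hI₂.const_mul _, (hI₁.const_mul _).add (hI₂.const_mul _),
    hI₃.const_mul _]

end ChangePoint

theorem stmt_5_general {Ω : Type*} [MeasurableSpace Ω] (P : Measure Ω)
    (p n : ℕ) (X : ℕ → Ω → EuclideanSpace ℝ (Fin p))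
    (μ Δ : EuclideanSpace ℝ (Fin p))
    (k₀ : ℕ) (hk₀ : 2 ≤ k₀) (hk₀n : k₀ ≤ n - 2)
    (hint : ∀ i ∈ Finset.Icc 1 n, Integrable (X i) P)
    (hindep : iIndepFun
      (fun i : (Finset.Icc 1 n : Finset ℕ) => X i.val) P)
    (hmean₁ : ∀ i ∈ Finset.Icc 1 k₀, ∫ ω, X i ω ∂P = μ)
    (hmean₂ : ∀ i ∈ Finset.Icc (k₀+1) n, ∫ ω, X i ω ∂P = μ + Δ) :
    (∫ ω,
      ((2 / ((k₀ : ℝ) * ((k₀ : ℝ) - 1))) *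
          (∑ i ∈ Finset.Icc 1 k₀, ∑ j ∈ Finset.Icc 1 k₀, if i < j then ⟪X i ω, X j ω⟫ else 0)
        + (2 / (((n : ℝ) - k₀) * ((n : ℝ) - k₀ - 1))) *
          (∑ i ∈ Finset.Icc (k₀+1) n, ∑ j ∈ Finset.Icc (k₀+1) n,
            if i < j then ⟪X i ω, X j ω⟫ else 0)
        - (2 / ((k₀ : ℝ) * ((n : ℝ) - k₀))) *
          (∑ i ∈ Finset.Icc 1 k₀, ∑ j ∈ Finset.Icc (k₀+1) n, ⟪X i ω, X j ω⟫)) ∂P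
      = ‖Δ‖ ^ 2)
    ∧ (Δ ≠ 0 →
      0 < ∫ ω,
        ((2 / ((k₀ : ℝ) * ((k₀ : ℝ) - 1))) *
            (∑ i ∈ Finset.Icc 1 k₀, ∑ j ∈ Finset.Icc 1 k₀, if i < j then ⟪X i ω, X j ω⟫ else 0)
          + (2 / (((n : ℝ) - k₀) * ((n : ℝ) - k₀ - 1))) *
            (∑ i ∈ Finset.Icc (k₀+1) n, ∑ j ∈ Finset.Icc (k₀+1) n,
              if i < j then ⟪X i ω, X j ω⟫ else 0)
          - (2 / ((k₀ : ℝ) * ((n : ℝ) - k₀))) *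
            (∑ i ∈ Finset.Icc 1 k₀, ∑ j ∈ Finset.Icc (k₀+1) n, ⟪X i ω, X j ω⟫)) ∂P) := by
  have hkn : k₀ + 2 ≤ n := by omega
  have hpair : (↑(Icc 1 n) : Set ℕ).Pairwise fun i j => IndepFun (X i) (X j) P :=
    fun i hi j hj hij => hindep.indepFun (i := ⟨i, hi⟩) (j := ⟨j, hj⟩) (by simpa using hij)
  have hG : ∫ ω, changePointStat n k₀ (X · ω) ∂P = ‖Δ‖ ^ 2 := by
    rw [integral_changePointStat (by omega) hint hpair,
      changePointStat_eq_norm_sub_sq hk₀ hkn hmean₁ hmean₂, sub_add_cancel_left, norm_neg]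
  -- the integrand in the goal is `changePointStat n k₀ (X · ω)` unfolded
  exact ⟨hG, fun hΔ => hG ▸ pow_pos (norm_pos_iff.2 hΔ) 2⟩

/-- If `X₁,…,Xₙ` are mutually independent integrable random vectors in `ℝ^p` with
a single change in mean at time `k₀` (mean `μ` before, `μ + Δ` after), then
`E[G_n(k₀)] = ‖Δ‖₂²`; in particular `E[G_n(k₀)] > 0` whenever `Δ ≠ 0`. -/
theorem stmt_5 {Ω : Type*} [MeasurableSpace Ω] (P : Measure Ω) [IsProbabilityMeasure P]
    (p n : ℕ) (X : ℕ → Ω → EuclideanSpace ℝ (Fin p))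
    (μ Δ : EuclideanSpace ℝ (Fin p))
    (k₀ : ℕ) (hk₀ : 2 ≤ k₀) (hk₀n : k₀ ≤ n - 2)
    (hint : ∀ i ∈ Finset.Icc 1 n, Integrable (X i) P)
    (hindep : iIndepFun
      (fun i : (Finset.Icc 1 n : Finset ℕ) => X i.val) P)
    (hmean₁ : ∀ i ∈ Finset.Icc 1 k₀, ∫ ω, X i ω ∂P = μ)
    (hmean₂ : ∀ i ∈ Finset.Icc (k₀+1) n, ∫ ω, X i ω ∂P = μ + Δ) :
    (∫ ω,
      ((2 / ((k₀ : ℝ) * ((k₀ : ℝ) - 1))) *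
          (∑ i ∈ Finset.Icc 1 k₀, ∑ j ∈ Finset.Icc 1 k₀, if i < j then ⟪X i ω, X j ω⟫ else 0)
        + (2 / (((n : ℝ) - k₀) * ((n : ℝ) - k₀ - 1))) *
          (∑ i ∈ Finset.Icc (k₀+1) n, ∑ j ∈ Finset.Icc (k₀+1) n,
            if i < j then ⟪X i ω, X j ω⟫ else 0)
        - (2 / ((k₀ : ℝ) * ((n : ℝ) - k₀))) *
          (∑ i ∈ Finset.Icc 1 k₀, ∑ j ∈ Finset.Icc (k₀+1) n, ⟪X i ω, X j ω⟫)) ∂P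
      = ‖Δ‖ ^ 2)
    ∧ (Δ ≠ 0 →
      0 < ∫ ω,
        ((2 / ((k₀ : ℝ) * ((k₀ : ℝ) - 1))) *
            (∑ i ∈ Finset.Icc 1 k₀, ∑ j ∈ Finset.Icc 1 k₀, if i < j then ⟪X i ω, X j ω⟫ else 0)
          + (2 / (((n : ℝ) - k₀) * ((n : ℝ) - k₀ - 1))) *
            (∑ i ∈ Finset.Icc (k₀+1) n, ∑ j ∈ Finset.Icc (k₀+1) n,
              if i < j then ⟪X i ω, X j ω⟫ else 0)
          - (2 / ((k₀ : ℝ) * ((n : ℝ) - k₀))) *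
            (∑ i ∈ Finset.Icc 1 k₀, ∑ j ∈ Finset.Icc (k₀+1) n, ⟪X i ω, X j ω⟫)) ∂P) :=
  stmt_5_general P p n X μ Δ k₀ hk₀ hk₀n hint hindep hmean₁ hmean₂
end
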